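/- arXiv:1811.00082 — 3 statements merged into one kernel-verified Lean document; each statement's English description precedes it below -/
import Mathlib

section
/- For k with 2 ≤ k ≤ n - 1, the permutation w with one-line notation (k+1)(k+2)⋯n k 1 2 ⋯ (k-1) contains exactly (n-k)(k-1) occurrences of the pattern 321 (triples i < j < l with w(i) > w(j) > w(l)). -/
/-! `w` is increasing on each side of position `n - k`, so the middle entry of a 321-pattern can
only sit at `n - k`; conversely every `i < n - k < l` completes one, since the entries left of
`n - k` exceed `w (n - k)` and those right of it lie below. -/

open Finset

section Pattern321

variable {n : ℕ} {α : Type*} [LinearOrder α]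

def occurrences321 (w : Fin n → α) : Finset (Fin n × Fin n × Fin n) :=
  {p | p.1 < p.2.1 ∧ p.2.1 < p.2.2 ∧ w p.2.2 < w p.2.1 ∧ w p.2.1 < w p.1}

variable {w : Fin n → α} (m : Fin n)

theorem occurrences321_eq_of_pivot (hlo : StrictMonoOn w (Set.Iio m))
    (hhi : StrictMonoOn w (Set.Ioi m)) (hleft : ∀ i < m, w m < w i)
    (hright : ∀ l, m < l → w l < w m) :
    occurrences321 w = Iio m ×ˢ {m} ×ˢ Ioi m := by
  ext ⟨i, j, l⟩
  simp only [occurrences321, mem_filter, mem_univ, true_and, mem_product, mem_Iio,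
    mem_singleton, mem_Ioi]
  constructor
  · rintro ⟨hij, hjl, hlj, hji⟩
    obtain rfl : j = m := by
      by_contra hjm
      rcases lt_or_gt_of_ne hjm with hj | hj
      · exact (hlo (hij.trans hj) hj hij).not_gt hji
      · exact (hhi hj (hj.trans hjl) hjl).not_gt hlj
    exact ⟨hij, rfl, hjl⟩
  · rintro ⟨hi, rfl, hl⟩
    exact ⟨hi, hl, hright l hl, hleft i hi⟩

theorem card_occurrences321_of_pivot (hlo : StrictMonoOn w (Set.Iio m))
    (hhi : StrictMonoOn w (Set.Ioi m)) (hleft : ∀ i < m, w m < w i)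
    (hright : ∀ l, m < l → w l < w m) :
    #(occurrences321 w) = m * (n - 1 - m) := by
  rw [occurrences321_eq_of_pivot m hlo hhi hleft hright, card_product, card_product,
    Fin.card_Iio, card_singleton, Fin.card_Ioi, one_mul]

end Pattern321

theorem stmt_4_general (n k : ℕ) (hk1 : 2 ≤ k) (hk2 : k ≤ n - 1)
    (w : Equiv.Perm (Fin n))
    (h1 : ∀ i : Fin n, (i : ℕ) < n - k → (w i : ℕ) = k + (i : ℕ))
    (h2 : ∀ i : Fin n, (i : ℕ) = n - k → (w i : ℕ) = k - 1)
    (h3 : ∀ i : Fin n, n - k < (i : ℕ) → (w i : ℕ) = (i : ℕ) - (n - k) - 1) :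
    (Finset.filter (fun p : Fin n × Fin n × Fin n =>
        p.1 < p.2.1 ∧ p.2.1 < p.2.2 ∧ w p.2.2 < w p.2.1 ∧ w p.2.1 < w p.1)
      Finset.univ).card = (n - k) * (k - 1) := by
  let m : Fin n := ⟨n - k, by omega⟩
  have hm : (m : ℕ) = n - k := rfl
  have hwm : (w m : ℕ) = k - 1 := h2 m hm
  have hcard := card_occurrences321_of_pivot (w := w) m
    (fun i hi j hj hij => by
      simp only [Set.mem_Iio, Fin.lt_def, hm] at hi hj hij ⊢
      rw [h1 i hi, h1 j hj]
      omega)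
    (fun i hi j hj hij => by
      simp only [Set.mem_Ioi, Fin.lt_def, hm] at hi hj hij ⊢
      rw [h3 i hi, h3 j hj]
      omega)
    (fun i hi => by
      simp only [Fin.lt_def, hm] at hi ⊢
      rw [h1 i hi, hwm]
      omega)
    (fun l hl => by
      simp only [Fin.lt_def, hm] at hl ⊢
      rw [h3 l hl, hwm]
      omega)
  rw [occurrences321, hm] at hcard
  rw [hcard]
  congr 1
  omega

/-- The permutation with one-line notation (k+1)(k+2)⋯n k 1 2 ⋯ (k-1)
(0-indexed: w(i) = k+i for i < n-k, w(n-k) = k-1, w(i) = i-(n-k)-1 for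
i > n-k) has exactly (n-k)(k-1) occurrences of the pattern 321. -/
theorem stmt_4 (n k : ℕ) (hn : 3 ≤ n) (hk1 : 2 ≤ k) (hk2 : k ≤ n - 1)
    (w : Equiv.Perm (Fin n))
    (h1 : ∀ i : Fin n, (i : ℕ) < n - k → (w i : ℕ) = k + (i : ℕ))
    (h2 : ∀ i : Fin n, (i : ℕ) = n - k → (w i : ℕ) = k - 1)
    (h3 : ∀ i : Fin n, n - k < (i : ℕ) → (w i : ℕ) = (i : ℕ) - (n - k) - 1) :
    (Finset.filter (fun p : Fin n × Fin n × Fin n =>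
        p.1 < p.2.1 ∧ p.2.1 < p.2.2 ∧ w p.2.2 < w p.2.1 ∧ w p.2.1 < w p.1)
      Finset.univ).card = (n - k) * (k - 1) :=
  stmt_4_general n k hk1 hk2 w h1 h2 h3
end

section
/- Let f denote the Fibonacci sequence with f(0)=0, f(1)=1. Define P(n) = (4n·f(n-1) + (2n+8)·f(n))/5 for n ≥ 2. Then P satisfies P(2) = 4, P(3) = 8, and P(n+1) = P(n) + P(n-1) + 2·f(n) for all n ≥ 3. Equivalently, 5·P(n) = 4n·f(n-1) + (2n+8)·f(n) and the recursion holds. -/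
/-- If 5·P(n) = 4n·f(n-1) + (2n+8)·f(n) for all n ≥ 2, then P(2)=4, P(3)=8 and
P(n+1) = P(n) + P(n-1) + 2·f(n) for all n ≥ 3. -/
theorem stmt_8 (P : ℕ → ℕ)
    (h : ∀ n, 2 ≤ n → 5 * P n = 4 * n * Nat.fib (n - 1) + (2 * n + 8) * Nat.fib n) :
    P 2 = 4 ∧ P 3 = 8 ∧
      ∀ n, 3 ≤ n → P (n + 1) = P n + P (n - 1) + 2 * Nat.fib n := by
  refine ⟨by have := h 2 (by norm_num); simp [Nat.fib] at this; omega,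
    by have := h 3 (by norm_num); simp [Nat.fib] at this; omega, ?_⟩
  intro n hn
  obtain ⟨m, rfl⟩ : ∃ m, n = m + 3 := ⟨n - 3, by omega⟩
  have h1 := h (m + 3) (by omega)
  have h2 := h (m + 4) (by omega)
  have h3 := h (m + 2) (by omega)
  have key : 5 * P (m + 3 + 1) = 5 * P (m + 3) + 5 * P (m + 3 - 1)
      + 5 * (2 * Nat.fib (m + 3)) := by
    simp only [show m + 3 - 1 = m + 2 by omega, show m + 4 - 1 = m + 3 by omega,
      show m + 3 + 1 = m + 4 by omega, show m + 2 - 1 = m + 1 by omega] at h1 h2 h3 ⊢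
    rw [h1, h2, h3]
    simp only [show Nat.fib (m + 4) = Nat.fib (m + 1) + 2 * Nat.fib (m + 2) by
        rw [Nat.fib_add_two (n := m + 2), Nat.fib_add_two (n := m + 1)]; ring,
      show Nat.fib (m + 3) = Nat.fib (m + 1) + Nat.fib (m + 2) from
        Nat.fib_add_two (n := m + 1)]
    ring
  omega
end

section
/- Let P be defined by P(2)=4, P(3)=8, and P(n+1)=P(n)+P(n-1)+2·f(n) for n ≥ 3, where f is the Fibonacci sequence. Then the generating function identity holds: (1 - x - x²)² · Σ_{n≥2} P(n)·xⁿ = 4x² - 4x⁴ - 2x⁵, as an identity of formal power series over ℚ. -/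
/-!
Multiplying by `1 - X - X²` once turns the recursion for `P` into the identity
`(1 - X - X²) · Σ P(n) Xⁿ = 2X² + 2X³ + 2X·F`, where `F = Σ fib(n) Xⁿ`: the coefficients of both
sides are `4, 4` in degrees `2, 3` and `2 fib(n-1)` beyond. Multiplying once more and using
`(1 - X - X²) · F = X` leaves a polynomial.
-/

open PowerSeries

section

variable {R : Type*} [Ring R]

theorem coeff_zero_one_sub_X_sub_X_sq_mul (φ : R⟦X⟧) :
    coeff 0 ((1 - X - X ^ 2) * φ) = coeff 0 φ := by
  simp [sub_mul, pow_two, mul_assoc]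

theorem coeff_one_one_sub_X_sub_X_sq_mul (φ : R⟦X⟧) :
    coeff 1 ((1 - X - X ^ 2) * φ) = coeff 1 φ - coeff 0 φ := by
  simp [sub_mul, pow_two, mul_assoc, coeff_succ_X_mul]

theorem coeff_add_two_one_sub_X_sub_X_sq_mul (φ : R⟦X⟧) (n : ℕ) :
    coeff (n + 2) ((1 - X - X ^ 2) * φ) = coeff (n + 2) φ - coeff (n + 1) φ - coeff n φ := by
  simp only [sub_mul, one_mul, map_sub, coeff_succ_X_mul, coeff_X_pow_mul]

theorem one_sub_X_sub_X_sq_mul_fib : (1 - X - X ^ 2) * mk (fun n ↦ (Nat.fib n : R)) = X := by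
  ext (_ | _ | n)
  · simp [coeff_zero_one_sub_X_sub_X_sq_mul]
  · simp [coeff_one_one_sub_X_sub_X_sq_mul]
  · simp [coeff_add_two_one_sub_X_sub_X_sq_mul, coeff_X, Nat.fib_add_two]

end

theorem one_sub_X_sub_X_sq_mul_of_rec (P : ℕ → ℕ) (h2 : P 2 = 4) (h3 : P 3 = 8)
    (hrec : ∀ n, 3 ≤ n → P (n + 1) = P n + P (n - 1) + 2 * Nat.fib n) :
    (1 - X - X ^ 2) * mk (fun n ↦ if 2 ≤ n then (P n : ℚ) else 0)
      = 2 * (X ^ 2 + X ^ 3 + X * mk (fun n ↦ (Nat.fib n : ℚ))) := by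
  rw [← map_ofNat (C (R := ℚ)) 2]
  ext (_ | _ | _ | _ | n)
  · simp [coeff_zero_one_sub_X_sub_X_sq_mul]
  · simp [coeff_one_one_sub_X_sub_X_sq_mul, coeff_X_pow]
  · norm_num [coeff_add_two_one_sub_X_sub_X_sq_mul, h2, coeff_X_pow]
  · norm_num [coeff_add_two_one_sub_X_sub_X_sq_mul, h2, h3, coeff_X_pow]
  · simp [coeff_add_two_one_sub_X_sub_X_sq_mul, coeff_X_pow, hrec (n + 3) (by omega)]
    ring

/-- Generating function for the perimeter-domino counts P(n):
(1 - x - x²)² · Σ_{n≥2} P(n) xⁿ = 4x² - 4x⁴ - 2x⁵ in ℚ[[x]]. -/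
theorem stmt_9 (P : ℕ → ℕ) (h2 : P 2 = 4) (h3 : P 3 = 8)
    (hrec : ∀ n, 3 ≤ n → P (n + 1) = P n + P (n - 1) + 2 * Nat.fib n) :
    (1 - PowerSeries.X - PowerSeries.X ^ 2) ^ 2 *
        PowerSeries.mk (fun n => if 2 ≤ n then (P n : ℚ) else 0)
      = 4 * PowerSeries.X ^ 2 - 4 * PowerSeries.X ^ 4 - 2 * PowerSeries.X ^ 5 := by
  calc _ = (1 - X - X ^ 2) * ((1 - X - X ^ 2) * mk (fun n ↦ if 2 ≤ n then (P n : ℚ) else 0)) := by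
        ring
    _ = 2 * ((1 - X - X ^ 2) * (X ^ 2 + X ^ 3)
          + X * ((1 - X - X ^ 2) * mk (fun n ↦ (Nat.fib n : ℚ)))) := by
        rw [one_sub_X_sub_X_sq_mul_of_rec P h2 h3 hrec]
        ring
    _ = _ := by
        rw [one_sub_X_sub_X_sq_mul_fib]
        ring
end
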